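/- arXiv:2412.15492 — 2 statements merged into one kernel-verified Lean document; each statement's English description precedes it below -/
import Mathlib

section
/- Suppose the winning probability of a bid depends only on its score under the quasi-linear scoring rule h(P,Q) = Q^T α − P, and profit is π(P,Q) = (P − C(Q,θ))·Prob(win | h(P,Q)). If Q* maximizes Q ↦ Q^T α − C(Q,θ) strictly better than Q (i.e., (Q*)^T α − C(Q*,θ) > Q^T α − C(Q,θ)) and Prob(win | h(P,Q)) > 0, then the modified bid (P', Q*) with P' = P + (Q* − Q)^T α satisfies π(P',Q*) > π(P,Q). -/
/-- If `Q*` gives a strictly larger value of `Q ↦ Q^T α − C(Q)` than `Q`, and the bid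
`(P,Q)` has positive winning probability, then the modified bid `(P',Q*)` with
`P' = P + (Q* − Q)^T α` has strictly larger profit. -/
theorem modified_bid_better (l : ℕ) (α : Fin l → ℝ) (C : (Fin l → ℝ) → ℝ)
    (w : ℝ → ℝ) (hw : ∀ s, 0 ≤ w s ∧ w s ≤ 1)
    (P : ℝ) (Q Qs : Fin l → ℝ)
    (hmax : (∑ i, α i * Qs i) - C Qs > (∑ i, α i * Q i) - C Q)
    (hpos : w ((∑ i, α i * Q i) - P) > 0) :
    ((P + ∑ i, α i * (Qs i - Q i)) - C Qs) *
        w ((∑ i, α i * Qs i) - (P + ∑ i, α i * (Qs i - Q i))) >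
      (P - C Q) * w ((∑ i, α i * Q i) - P) := by
  have hsum : ∑ i, α i * (Qs i - Q i) = (∑ i, α i * Qs i) - ∑ i, α i * Q i := by
    rw [← Finset.sum_sub_distrib]; congr 1; ext i; ring
  have hsc : (∑ i, α i * Qs i) - (P + ∑ i, α i * (Qs i - Q i))
      = (∑ i, α i * Q i) - P := by rw [hsum]; ring
  rw [hsc]
  apply mul_lt_mul_of_pos_right _ hpos
  rw [hsum]; linarith
end

section
/- In any equilibrium of the multi-attribute auction with quasi-linear scoring rule, the quality component of a bid maximizes Q ↦ Q^T α − C(Q,θ): formally, if (P,Q) maximizes π over all bids (among bids with positive winning probability at its score), then Q^T α − C(Q,θ) ≥ Q'^T α − C(Q',θ) for all Q'. -/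
/-- In any equilibrium of the multi-attribute auction with quasi-linear scoring rule,
the quality component of the bid maximizes `Q ↦ Q^T α − C(Q)`. -/
theorem equilibrium_quality_optimal (l : ℕ) (α : Fin l → ℝ) (C : (Fin l → ℝ) → ℝ)
    (w : ℝ → ℝ) (hw : ∀ s, 0 ≤ w s ∧ w s ≤ 1)
    (P : ℝ) (Q : Fin l → ℝ)
    (hpos : w ((∑ i, α i * Q i) - P) > 0)
    (heq : ∀ (P' : ℝ) (Q' : Fin l → ℝ),
      (P' - C Q') * w ((∑ i, α i * Q' i) - P') ≤
        (P - C Q) * w ((∑ i, α i * Q i) - P)) :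
    ∀ Q' : Fin l → ℝ, (∑ i, α i * Q' i) - C Q' ≤ (∑ i, α i * Q i) - C Q := by
  intro Q'
  have h := heq (P + (∑ i, α i * Q' i) - (∑ i, α i * Q i)) Q'
  have hs : (∑ i, α i * Q' i) - (P + (∑ i, α i * Q' i) - (∑ i, α i * Q i))
      = (∑ i, α i * Q i) - P := by ring
  rw [hs] at h
  have h2 := le_of_mul_le_mul_right h hpos
  linarith
end
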